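/- With E3 defined as in the modified-difficulty game (E3 a h 0 q = 0; for a > h, E3 a h (n+1) q = max ((h+1)*(1-q) + E3 (a-h-1) 0 n q) (q * E3 (a+1) h n q + (1-q) * (E3 a (h+1) n q - q)); for a ≤ h, E3 a h (n+1) q = max (E3 0 0 n q) (q * E3 (a+1) h n q + (1-q) * (E3 a (h+1) n q - q))), for all n ∈ ℕ and q ∈ [0,1], E3 0 0 n q = 0. -/
import Mathlib


noncomputable def E3 : ℕ → ℕ → ℕ → ℝ → ℝ
  | _, _, 0, _ => 0
  | a, h, n + 1, q =>
    if a > h then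
      max (((h : ℝ) + 1) * (1 - q) + E3 (a - h - 1) 0 n q)
        (q * E3 (a + 1) h n q + (1 - q) * (E3 a (h + 1) n q - q))
    else
      max (E3 0 0 n q)
        (q * E3 (a + 1) h n q + (1 - q) * (E3 a (h + 1) n q - q))

lemma E3_le (q : ℝ) (hq0 : 0 ≤ q) (hq1 : q ≤ 1) :
    ∀ n a h, E3 a h n q ≤ (a : ℝ) * (1 - q) := by
  intro n
  induction n with
  | zero => intro a h; simp [E3]; exact mul_nonneg (Nat.cast_nonneg _) (by linarith)
  | succ n ih =>
    intro a h
    have key : q * E3 (a + 1) h n q + (1 - q) * (E3 a (h + 1) n q - q)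
        ≤ (a : ℝ) * (1 - q) := by
      have h1 := ih (a + 1) h
      have h2 := ih a (h + 1)
      push_cast at h1 ⊢
      nlinarith [mul_le_mul_of_nonneg_left h1 hq0,
        mul_le_mul_of_nonneg_left h2 (by linarith : (0:ℝ) ≤ 1 - q)]
    rw [E3]
    split_ifs with hah
    · apply max_le _ key
      have h3 := ih (a - h - 1) 0
      have hc : ((a - h - 1 : ℕ) : ℝ) = (a : ℝ) - h - 1 := by
        have : h + 1 ≤ a := hah
        push_cast [Nat.sub_sub, Nat.cast_sub this]
        ring
      rw [hc] at h3
      nlinarith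
    · apply max_le _ key
      have h0 := ih 0 0
      simp at h0
      have : (0:ℝ) ≤ (a : ℝ) * (1 - q) := mul_nonneg (Nat.cast_nonneg _) (by linarith)
      linarith

theorem E3_zero_zero (n : ℕ) (q : ℝ) (hq0 : 0 ≤ q) (hq1 : q ≤ 1) :
    E3 0 0 n q = 0 := by
  induction n with
  | zero => rfl
  | succ n ih =>
    have hle := E3_le q hq0 hq1 (n + 1) 0 0
    simp at hle
    have hge : E3 0 0 n q ≤ E3 0 0 (n + 1) q := by
      rw [E3]; simp

    rw [ih] at hge
    linarith
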